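/- arXiv:2504.10417 — 6 statements merged into one kernel-verified Lean document; each statement's English description precedes it below -/
import Mathlib

section
/- Upper tail bound for the negative binomial distribution (Lemma on NegBin tails, part 1): Let r ≥ 1 be an integer, p ∈ (0,1], and let X = X_1 + ... + X_r be the sum of r independent geometric random variables, each with success probability p. Then for every real γ > 0 and every real n ≥ 2, P(X > (2/p)·(r + γ·log₂ n)) ≤ n^{-γ}. -/
open MeasureTheory ProbabilityTheory Real
open scoped ENNReal

/-!
Chernoff bound with base `s = 2 / (2 - p)`, chosen so that
`E[s ^ Xᵢ] = s p / (1 - s (1 - p)) = 2`. Independence and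
Markov's inequality give `P(X > t) ≤ 2 ^ r / s ^ t`, and since
`s = (1 - p/2)⁻¹ ≥ exp (p/2) ≥ 2 ^ (p/2)`, the threshold `t = (2/p)(r + γ log₂ n)` makes
`s ^ t ≥ 2 ^ (r + γ log₂ n) = 2 ^ r n ^ γ`.
-/

lemma tsum_ofReal_mul_geometric {a q : ℝ} (ha : 0 ≤ a) (hq0 : 0 ≤ q) (hq1 : q < 1) :
    ∑' k : ℕ, ENNReal.ofReal (a * q ^ k) = ENNReal.ofReal (a / (1 - q)) := by
  rw [← ENNReal.ofReal_tsum_of_nonneg (fun k => by positivity)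
    ((summable_geometric_of_lt_one hq0 hq1).mul_left a), tsum_mul_left,
    tsum_geometric_of_lt_one hq0 hq1, div_eq_mul_inv]

lemma two_rpow_le_inv_one_sub {x : ℝ} (hx0 : 0 ≤ x) (hx1 : x < 1) :
    (2 : ℝ) ^ x ≤ (1 - x)⁻¹ :=
  calc (2 : ℝ) ^ x = exp (x * log 2) := by rw [rpow_def_of_pos two_pos, mul_comm]
    _ ≤ exp x := exp_le_exp.2 <| mul_le_of_le_one_right hx0 (log_two_lt_d9.le.trans (by norm_num))
    _ ≤ (1 - x)⁻¹ := by simpa using exp_bound_div_one_sub_of_interval hx0 hx1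

section

variable {Ω : Type*} [MeasurableSpace Ω] {μ : Measure Ω}

lemma lintegral_comp_nat_eq_tsum {Z : Ω → ℕ} (hZ : Measurable Z) (f : ℕ → ℝ≥0∞) :
    ∫⁻ ω, f (Z ω) ∂μ = ∑' k, f k * μ {ω | Z ω = k} := by
  rw [← lintegral_map (measurable_of_countable f) hZ, lintegral_countable']
  simp_rw [Measure.map_apply hZ (measurableSet_singleton _)]
  rfl

lemma measure_eq_zero_of_tsum_succ [IsProbabilityMeasure μ] {Z : Ω → ℕ} (hZ : Measurable Z)
    (h : ∑' k, μ {ω | Z ω = k + 1} = 1) : μ {ω | Z ω = 0} = 0 := by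
  have htotal : ∑' k, μ {ω | Z ω = k} = 1 := by
    simpa using (lintegral_comp_nat_eq_tsum (μ := μ) hZ 1).symm
  rw [tsum_eq_zero_add' ENNReal.summable, h] at htotal
  simpa using htotal

lemma lintegral_pow_of_geometric [IsProbabilityMeasure μ] {p s : ℝ} (hp0 : 0 < p) (hp1 : p ≤ 1)
    (hs : 0 ≤ s) (hsp : s * (1 - p) < 1) {Z : Ω → ℕ} (hZ : Measurable Z)
    (hgeom : ∀ k : ℕ, 1 ≤ k → μ {ω | Z ω = k} = ENNReal.ofReal ((1 - p) ^ (k - 1) * p)) :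
    ∫⁻ ω, ENNReal.ofReal s ^ Z ω ∂μ = ENNReal.ofReal (s * p / (1 - s * (1 - p))) := by
  have hsucc (k : ℕ) : μ {ω | Z ω = k + 1} = ENNReal.ofReal (p * (1 - p) ^ k) := by
    rw [hgeom (k + 1) k.succ_pos, Nat.add_sub_cancel, mul_comm]
  have hzero : μ {ω | Z ω = 0} = 0 := by
    refine measure_eq_zero_of_tsum_succ hZ ?_
    simp_rw [hsucc]
    rw [tsum_ofReal_mul_geometric hp0.le (by linarith) (by linarith), sub_sub_cancel,
      div_self hp0.ne', ENNReal.ofReal_one]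
  have hterm (k : ℕ) : ENNReal.ofReal s ^ (k + 1) * μ {ω | Z ω = k + 1}
      = ENNReal.ofReal (s * p * (s * (1 - p)) ^ k) := by
    rw [hsucc, ← ENNReal.ofReal_pow hs, ← ENNReal.ofReal_mul (by positivity), mul_pow, pow_succ]
    congr 1; ring
  rw [lintegral_comp_nat_eq_tsum hZ, tsum_eq_zero_add' ENNReal.summable, hzero, mul_zero,
    zero_add]
  simp_rw [hterm]
  exact tsum_ofReal_mul_geometric (by positivity) (by nlinarith) hsp

lemma lintegral_two_div_pow_of_geometric [IsProbabilityMeasure μ] {p : ℝ} (hp0 : 0 < p)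
    (hp1 : p ≤ 1) {Z : Ω → ℕ} (hZ : Measurable Z)
    (hgeom : ∀ k : ℕ, 1 ≤ k → μ {ω | Z ω = k} = ENNReal.ofReal ((1 - p) ^ (k - 1) * p)) :
    ∫⁻ ω, ENNReal.ofReal (2 / (2 - p)) ^ Z ω ∂μ = 2 := by
  have h2p : 0 < 2 - p := by linarith
  rw [lintegral_pow_of_geometric hp0 hp1 (by positivity) ?lt hZ hgeom]
  case lt => rw [div_mul_eq_mul_div, div_lt_one h2p]; linarith
  have hdenom : 1 - 2 / (2 - p) * (1 - p) = p / (2 - p) := by field_simp; ring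
  rw [hdenom, show 2 / (2 - p) * p / (p / (2 - p)) = 2 by field_simp]
  exact ENNReal.ofReal_ofNat 2

lemma lintegral_pow_sum_of_iIndepFun {ι : Type*} [Fintype ι] {X : ι → Ω → ℕ}
    (hX : ∀ i, Measurable (X i)) (hind : iIndepFun X μ) (a : ℝ≥0∞) :
    ∫⁻ ω, a ^ (∑ i, X i ω) ∂μ = ∏ i, ∫⁻ ω, a ^ X i ω ∂μ := by
  simp_rw [← Finset.prod_pow_eq_pow_sum]
  exact lintegral_prod_eq_prod_lintegral_of_indepFun _ (fun i ω => a ^ X i ω)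
    (hind.comp _ fun _ => measurable_of_countable _)
    fun i => (measurable_of_countable _).comp (hX i)

lemma measure_lt_le_lintegral_pow_div {N : Ω → ℕ} (hN : Measurable N) {s : ℝ} (hs : 1 ≤ s)
    (t : ℝ) :
    μ {ω | t < N ω} ≤ (∫⁻ ω, ENNReal.ofReal s ^ N ω ∂μ) / ENNReal.ofReal (s ^ t) := by
  have hst : 0 < s ^ t := rpow_pos_of_pos (by linarith) t
  refine (measure_mono fun ω (hω : t < N ω) => ?_).trans
    (meas_ge_le_lintegral_div ((measurable_of_countable _).comp hN).aemeasurable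
      (ENNReal.ofReal_pos.2 hst).ne' ENNReal.ofReal_ne_top)
  show ENNReal.ofReal (s ^ t) ≤ ENNReal.ofReal s ^ N ω
  rw [← ENNReal.ofReal_pow (by linarith), ← rpow_natCast]
  exact ENNReal.ofReal_le_ofReal (rpow_le_rpow_of_exponent_le hs hω.le)

end

lemma two_pow_mul_rpow_le {p : ℝ} (hp0 : 0 < p) (hp1 : p ≤ 1) (r : ℕ) {γ n : ℝ}
    (hγ : 0 ≤ γ) (hn : 1 ≤ n) :
    (2 : ℝ) ^ r * n ^ γ ≤ (2 / (2 - p)) ^ ((2 / p) * (r + γ * logb 2 n)) := by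
  set t := (2 / p) * (r + γ * logb 2 n)
  have ht : 0 ≤ t := by have := logb_nonneg one_lt_two hn; positivity
  have hbase : (2 : ℝ) ^ (p / 2) ≤ 2 / (2 - p) := by
    convert two_rpow_le_inv_one_sub (x := p / 2) (by positivity) (by linarith) using 1
    field_simp
  calc (2 : ℝ) ^ r * n ^ γ = 2 ^ ((p / 2) * t) := by
        rw [show (p / 2) * t = r + logb 2 n * γ by simp only [t]; field_simp,
          rpow_add two_pos, rpow_mul zero_le_two, rpow_logb two_pos one_lt_two.ne' (by linarith),
          rpow_natCast]
    _ = (2 ^ (p / 2)) ^ t := rpow_mul zero_le_two _ _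
    _ ≤ (2 / (2 - p)) ^ t := rpow_le_rpow (by positivity) hbase ht

theorem negbin_upper_tail_general
    {Ω : Type*} [MeasurableSpace Ω] (μ : Measure Ω) [IsProbabilityMeasure μ]
    (r : ℕ) (p : ℝ) (hp0 : 0 < p) (hp1 : p ≤ 1)
    (X : Fin r → Ω → ℕ)
    (hmeas : ∀ i, Measurable (X i))
    (hindep : iIndepFun X μ)
    (hgeom : ∀ i, ∀ k : ℕ, 1 ≤ k →
      μ {ω | X i ω = k} = ENNReal.ofReal ((1 - p) ^ (k - 1) * p))
    (γ : ℝ) (hγ : 0 < γ) (n : ℝ) (hn : 2 ≤ n) :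
    μ {ω | (2 / p) * (r + γ * Real.logb 2 n) < ∑ i, (X i ω : ℝ)}
      ≤ ENNReal.ofReal (n ^ (-γ)) := by
  set s := 2 / (2 - p)
  set t := (2 / p) * (r + γ * Real.logb 2 n)
  have hs : 1 ≤ s := by rw [le_div_iff₀ (by linarith)]; linarith
  have hn0 : 0 < n := by linarith
  have hst : 0 < s ^ t := rpow_pos_of_pos (by linarith) t
  calc μ {ω | t < ∑ i, (X i ω : ℝ)}
      ≤ (∫⁻ ω, ENNReal.ofReal s ^ (∑ i, X i ω) ∂μ) / ENNReal.ofReal (s ^ t) := by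
        simpa only [Nat.cast_sum] using
          measure_lt_le_lintegral_pow_div (Finset.univ.measurable_sum fun i _ => hmeas i) hs t
    _ = 2 ^ r / ENNReal.ofReal (s ^ t) := by
        rw [lintegral_pow_sum_of_iIndepFun hmeas hindep, Finset.prod_eq_pow_card fun i _ =>
          lintegral_two_div_pow_of_geometric hp0 hp1 (hmeas i) (hgeom i), Finset.card_fin]
    _ ≤ ENNReal.ofReal (n ^ (-γ)) := by
        rw [ENNReal.div_le_iff_le_mul (.inl (ENNReal.ofReal_pos.2 hst).ne')
            (.inl ENNReal.ofReal_ne_top),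
          ← ENNReal.ofReal_mul (rpow_nonneg hn0.le _), rpow_neg hn0.le, inv_mul_eq_div,
          ← ENNReal.ofReal_ofNat 2, ← ENNReal.ofReal_pow zero_le_two]
        exact ENNReal.ofReal_le_ofReal <| (le_div_iff₀ (rpow_pos_of_pos hn0 γ)).2 <|
          two_pow_mul_rpow_le hp0 hp1 r hγ.le (by linarith)

/-- Upper tail bound for the negative binomial distribution: the sum of `r`
independent geometric random variables (success probability `p`, values in the
positive integers) exceeds `(2/p)·(r + γ·log₂ n)` with probability at most `n^{-γ}`. -/
theorem negbin_upper_tail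
    {Ω : Type*} [MeasurableSpace Ω] (μ : Measure Ω) [IsProbabilityMeasure μ]
    (r : ℕ) (hr : 1 ≤ r) (p : ℝ) (hp0 : 0 < p) (hp1 : p ≤ 1)
    (X : Fin r → Ω → ℕ)
    (hmeas : ∀ i, Measurable (X i))
    (hindep : iIndepFun X μ)
    (hgeom : ∀ i, ∀ k : ℕ, 1 ≤ k →
      μ {ω | X i ω = k} = ENNReal.ofReal ((1 - p) ^ (k - 1) * p))
    (γ : ℝ) (hγ : 0 < γ) (n : ℝ) (hn : 2 ≤ n) :
    μ {ω | (2 / p) * (r + γ * Real.logb 2 n) < ∑ i, (X i ω : ℝ)}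
      ≤ ENNReal.ofReal (n ^ (-γ)) :=
  negbin_upper_tail_general μ r p hp0 hp1 X hmeas hindep hgeom γ hγ n hn
end

section
/- Lower tail bound for the negative binomial distribution (Lemma on NegBin tails, part 2): Let r ≥ 1 be an integer, p ∈ (0,1], and let X = X_1 + ... + X_r be the sum of r independent geometric random variables, each with success probability p. Then P(X ≤ r/(2p)) ≤ exp(-r/6). -/
open MeasureTheory ProbabilityTheory Real

/-!
Chernoff's bound at `t = -log (1 + p)`. There the moment generating function
`p e^t / (1 - (1 - p) e^t)` of a geometric variable equals `1 / 2`, so by independence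
`P(X ≤ r/(2p)) ≤ e^{-t r/(2p)} 2^{-r}`. Since `log (1 + p) ≤ p`, the first factor is at most
`e^{r/2}`, and since `log 2 > 2/3`, the second is at most `e^{-2r/3}`.
-/

namespace ProbabilityTheory

lemma tsum_measure_singleton_eq_one {α : Type*} [MeasurableSpace α] [Countable α]
    [MeasurableSingletonClass α] (ν : Measure α) [IsProbabilityMeasure ν] :
    ∑' a, ν {a} = 1 := by
  simpa using ν.tsum_indicator_apply_singleton Set.univ MeasurableSet.univ

lemma measure_eq_of_measure_singleton_succ_eq {ν ν' : Measure ℕ} [IsProbabilityMeasure ν]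
    [IsProbabilityMeasure ν'] (h : ∀ k, ν {k + 1} = ν' {k + 1}) : ν = ν' := by
  refine Measure.ext_iff_singleton.mpr fun a => ?_
  cases a with
  | succ k => exact h k
  | zero =>
    have hν := tsum_measure_singleton_eq_one ν
    have hν' := tsum_measure_singleton_eq_one ν'
    rw [tsum_eq_zero_add' ENNReal.summable, tsum_congr h] at hν
    rw [tsum_eq_zero_add' ENNReal.summable] at hν'
    have hfin : ∑' k, ν' {k + 1} ≠ ⊤ :=
      ne_top_of_le_ne_top ENNReal.one_ne_top (hν' ▸ le_add_self)
    exact (ENNReal.add_left_inj hfin).mp (hν.trans hν'.symm)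

variable {Ω : Type*} [MeasurableSpace Ω] {μ : Measure Ω}

section Geometric

variable {X : Ω → ℕ} {p : unitInterval}

lemma map_eq_map_succ_geometricMeasure [IsProbabilityMeasure μ] (hp : p ≠ 0)
    (hX : Measurable X)
    (hgeom : ∀ k, μ {ω | X ω = k + 1} = ENNReal.ofReal ((1 - p) ^ k * p)) :
    μ.map X = (geometricMeasure p).map (· + 1) := by
  have : IsProbabilityMeasure (μ.map X) := Measure.isProbabilityMeasure_map hX.aemeasurable
  have : IsProbabilityMeasure ((geometricMeasure p).map (· + 1)) :=
    Measure.isProbabilityMeasure_map measurable_from_top.aemeasurable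
  refine measure_eq_of_measure_singleton_succ_eq fun k => ?_
  have hpre : (· + 1) ⁻¹' {k + 1} = ({k} : Set ℕ) := by ext; simp
  rw [Measure.map_apply hX (measurableSet_singleton _),
    Measure.map_apply measurable_from_top (measurableSet_singleton _), hpre,
    geometricMeasure_singleton hp]
  exact hgeom k

lemma mgf_natCast_of_map_eq_map_succ_geometricMeasure (hp : p ≠ 0) (hX : Measurable X)
    (hlaw : μ.map X = (geometricMeasure p).map (· + 1)) {t : ℝ} (ht : (1 - p) * exp t < 1) :
    mgf (fun ω => (X ω : ℝ)) μ t = p * exp t / (1 - (1 - p) * exp t) := by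
  have hmgf : mgf (fun ω => (X ω : ℝ)) μ t =
      ∫ n, exp (t * (n + 1 : ℕ)) ∂geometricMeasure p := by
    rw [mgf, ← integral_map (f := fun n : ℕ => exp (t * n)) hX.aemeasurable
      measurable_from_top.aestronglyMeasurable, hlaw,
      integral_map measurable_from_top.aemeasurable measurable_from_top.aestronglyMeasurable]
  have hterm : ∀ n : ℕ, ((1 - p : ℝ) ^ n * p) • exp (t * (n + 1 : ℕ)) =
      p * exp t * ((1 - p) * exp t) ^ n := by
    intro n
    rw [smul_eq_mul, Nat.cast_succ, mul_add_one, exp_add, mul_comm t, exp_nat_mul, mul_pow]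
    ring
  rw [hmgf, integral_geometricMeasure hp, tsum_congr hterm, tsum_mul_left,
    tsum_geometric_of_lt_one (by have := p.2.2; positivity) ht, div_eq_mul_inv]

lemma mgf_natCast_neg_log_one_add_eq_half [IsProbabilityMeasure μ] (hp : p ≠ 0)
    (hX : Measurable X)
    (hgeom : ∀ k, μ {ω | X ω = k + 1} = ENNReal.ofReal ((1 - p) ^ k * p)) :
    mgf (fun ω => (X ω : ℝ)) μ (-log (1 + (p : ℝ))) = 1 / 2 := by
  have hp0 : (0 : ℝ) < p := unitInterval.pos_iff_ne_zero.mpr hp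
  have hexp : exp (-log (1 + (p : ℝ))) = (1 + (p : ℝ))⁻¹ := by rw [exp_neg, exp_log (by linarith)]
  have hlt : (1 - p) * exp (-log (1 + (p : ℝ))) < 1 := by
    rw [hexp, ← div_eq_mul_inv, div_lt_one (by linarith)]
    linarith
  rw [mgf_natCast_of_map_eq_map_succ_geometricMeasure hp hX
    (map_eq_map_succ_geometricMeasure hp hX hgeom) hlt, hexp]
  field_simp
  rw [div_eq_one_iff_eq (by linarith)]
  ring

end Geometric

lemma measureReal_sum_le_le_exp_mul_pow [IsProbabilityMeasure μ] {ι : Type*} [Fintype ι]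
    {Y : ι → Ω → ℝ} (hmeas : ∀ i, Measurable (Y i)) (hindep : iIndepFun Y μ) {t m : ℝ}
    (ht : t ≤ 0) (hm : 0 < m) (hmgf : ∀ i, mgf (Y i) μ t = m) (ε : ℝ) :
    μ.real {ω | ∑ i, Y i ω ≤ ε} ≤ exp (-t * ε) * m ^ Fintype.card ι := by
  have hint : ∀ i ∈ Finset.univ, Integrable (fun ω => exp (t * Y i ω)) μ :=
    fun i _ => mgf_pos_iff.mp (hmgf i ▸ hm)
  have hchernoff := measure_le_le_exp_mul_mgf ε ht (hindep.integrable_exp_mul_sum hmeas hint)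
  rw [hindep.mgf_sum hmeas, Finset.prod_congr rfl fun i _ => hmgf i, Finset.prod_const,
    Finset.card_univ] at hchernoff
  simpa [Finset.sum_apply] using hchernoff

end ProbabilityTheory

lemma half_pow_le_exp (n : ℕ) : (1 / 2 : ℝ) ^ n ≤ exp (-(2 / 3) * n) := by
  rw [mul_comm, exp_nat_mul]
  gcongr
  rw [← exp_log (by norm_num : (0 : ℝ) < 1 / 2), one_div, log_inv, exp_le_exp]
  linarith [log_two_gt_d9]

lemma log_one_add_mul_div_le {r p : ℝ} (hr : 0 ≤ r) (hp : 0 < p) :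
    log (1 + p) * (r / (2 * p)) ≤ r / 2 :=
  calc log (1 + p) * (r / (2 * p)) ≤ p * (r / (2 * p)) := by
        gcongr
        linarith [log_le_sub_one_of_pos (by linarith : 0 < 1 + p)]
    _ = r / 2 := by field_simp

theorem negbin_lower_tail_general
    {Ω : Type*} [MeasurableSpace Ω] (μ : Measure Ω) [IsProbabilityMeasure μ]
    (r : ℕ) (p : ℝ) (hp0 : 0 < p) (hp1 : p ≤ 1)
    (X : Fin r → Ω → ℕ)
    (hmeas : ∀ i, Measurable (X i))
    (hindep : iIndepFun X μ)
    (hgeom : ∀ i, ∀ k : ℕ, 1 ≤ k →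
      μ {ω | X i ω = k} = ENNReal.ofReal ((1 - p) ^ (k - 1) * p)) :
    μ {ω | ∑ i, (X i ω : ℝ) ≤ (r : ℝ) / (2 * p)}
      ≤ ENNReal.ofReal (Real.exp (-(r : ℝ) / 6)) := by
  let q : unitInterval := ⟨p, hp0.le, hp1⟩
  have hq : q ≠ 0 := fun h => hp0.ne' congr(($h : ℝ))
  have hmgf (i : Fin r) : mgf (fun ω => (X i ω : ℝ)) μ (-log (1 + p)) = 1 / 2 :=
    mgf_natCast_neg_log_one_add_eq_half hq (hmeas i)
      fun k => by simpa using hgeom i (k + 1) (by omega)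
  have hchernoff := measureReal_sum_le_le_exp_mul_pow
    (fun i => measurable_from_top.comp (hmeas i)) (hindep.comp _ fun _ => measurable_from_top)
    (neg_nonpos.mpr (log_nonneg (by linarith))) one_half_pos hmgf ((r : ℝ) / (2 * p))
  rw [Fintype.card_fin, neg_neg] at hchernoff
  rw [← ofReal_measureReal]
  refine ENNReal.ofReal_le_ofReal (hchernoff.trans ?_)
  calc exp (log (1 + p) * (r / (2 * p))) * (1 / 2) ^ r
      ≤ exp (r / 2) * exp (-(2 / 3) * r) := by
        gcongr
        exacts [log_one_add_mul_div_le r.cast_nonneg hp0, half_pow_le_exp r]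
    _ = exp (-r / 6) := by rw [← exp_add]; ring_nf

/-- Lower tail bound for the negative binomial distribution: the sum of `r`
independent geometric random variables (success probability `p`, values in the
positive integers) is at most `r/(2p)` with probability at most `exp(-r/6)`. -/
theorem negbin_lower_tail
    {Ω : Type*} [MeasurableSpace Ω] (μ : Measure Ω) [IsProbabilityMeasure μ]
    (r : ℕ) (hr : 1 ≤ r) (p : ℝ) (hp0 : 0 < p) (hp1 : p ≤ 1)
    (X : Fin r → Ω → ℕ)
    (hmeas : ∀ i, Measurable (X i))
    (hindep : iIndepFun X μ)
    (hgeom : ∀ i, ∀ k : ℕ, 1 ≤ k →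
      μ {ω | X i ω = k} = ENNReal.ofReal ((1 - p) ^ (k - 1) * p)) :
    μ {ω | ∑ i, (X i ω : ℝ) ≤ (r : ℝ) / (2 * p)}
      ≤ ENNReal.ofReal (Real.exp (-(r : ℝ) / 6)) :=
  negbin_lower_tail_general μ r p hp0 hp1 X hmeas hindep hgeom
end

section
/- Tail bound for the ranking phase of the protocol (probabilistic core of the ranking subphase lemma): Let n ≥ 2 and k ≥ 1 be integers, γ > 0 a real number, and let a < b ≤ n be positive integers with a ≥ n/2^k and b - a ≤ n/2^k. Let T = T_1 + ... + T_{b-a}, where the T_i are independent geometric random variables and T_i has success probability (b-i)/(n·(n-1)). Then P(T ≤ 2n² + 2γ·2^k·n·log₂ n) ≥ 1 - n^{-γ}. -/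
/-!
Chernoff bound at `s = a / (2n(n-1))`. Every success probability `(b-i)/(n(n-1))` is at least
`a/(n(n-1)) = 2s`, and a geometric variable with success probability `p ≥ 2s` has moment
generating function `p eˢ / (1 - (1-p) eˢ) ≤ 2` at `s`. Independence then gives
`P(T ≥ t) ≤ e^{-st} 2^{b-a}`, and for the given `t` one has `st ≥ a + γ ln n`, while
`(b - a) ln 2 ≤ a` because `b - a ≤ n/2^k ≤ a`.
-/

open MeasureTheory ProbabilityTheory Real

theorem MeasureTheory.Measure.le_of_forall_singleton_le {α : Type*} [MeasurableSpace α]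
    [Countable α] [MeasurableSingletonClass α] {μ ν : Measure α} (h : ∀ a, μ {a} ≤ ν {a}) :
    μ ≤ ν := by
  intro S
  rw [← Measure.sum_smul_dirac μ, ← Measure.sum_smul_dirac ν, Measure.sum_apply _ .of_discrete,
    Measure.sum_apply _ .of_discrete]
  exact ENNReal.tsum_le_tsum fun a => by
    simp only [Measure.smul_apply, smul_eq_mul]
    exact mul_le_mul_left (h a) _

theorem one_sub_mul_exp_le_one (s : ℝ) : (1 - s) * exp s ≤ 1 :=
  calc (1 - s) * exp s ≤ exp (-s) * exp s := by gcongr; exact one_sub_le_exp_neg s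
    _ = 1 := by rw [← exp_add, neg_add_cancel, exp_zero]

theorem one_sub_mul_exp_lt_one {p s : ℝ} (hs : s < p) : (1 - p) * exp s < 1 := by
  nlinarith [exp_pos s, one_sub_mul_exp_le_one s]

theorem mul_exp_div_le_two {p s : ℝ} (hp : 0 < p) (hs : 2 * s ≤ p) :
    p * exp s / (1 - (1 - p) * exp s) ≤ 2 := by
  have := one_sub_mul_exp_lt_one (show s < p by linarith)
  rw [div_le_iff₀ (by linarith)]
  nlinarith [exp_pos s, one_sub_mul_exp_le_one s]

section Geometric

variable {Ω : Type*} [MeasurableSpace Ω] {μ : Measure Ω} {X : Ω → ℕ} {p : unitInterval}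
  {s : ℝ}

/-- `geometricMeasure` counts the failures before the first success, `X` counts the trials. -/
theorem map_eq_map_succ_geometricMeasure [IsProbabilityMeasure μ] (hX : Measurable X)
    (hp : p ≠ 0)
    (hX_pmf : ∀ j, 1 ≤ j → μ {ω | X ω = j} = ENNReal.ofReal ((1 - p) ^ (j - 1) * p)) :
    μ.map X = (geometricMeasure p).map (· + 1) := by
  have := Measure.isProbabilityMeasure_map (μ := μ) hX.aemeasurable
  have := Measure.isProbabilityMeasure_map (μ := geometricMeasure p)
    (measurable_of_countable (· + 1)).aemeasurable
  -- `hX_pmf` says nothing about `{0}`; `X ≠ 0` a.s. follows from both sides having mass one.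
  refine (Measure.eq_of_le_of_isProbabilityMeasure
    (Measure.le_of_forall_singleton_le fun j => ?_)).symm
  rw [Measure.map_apply (measurable_of_countable _) (.singleton j)]
  rcases j with _ | i
  · rw [show (· + 1) ⁻¹' ({0} : Set ℕ) = ∅ by ext; simp, measure_empty]
    exact zero_le
  · rw [Measure.map_apply hX (.singleton _), show (· + 1) ⁻¹' {i + 1} = {i} by ext; simp,
      geometricMeasure_singleton hp]
    change _ ≤ μ {ω | X ω = i + 1}
    rw [hX_pmf (i + 1) (by omega), Nat.add_sub_cancel]

theorem hasSum_geometric_mul_exp (hs : (1 - p) * exp s < 1) :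
    HasSum (fun n : ℕ => (1 - p : ℝ) ^ n * p * exp (s * (n + 1)))
      (p * exp s / (1 - (1 - p) * exp s)) := by
  have hr : 0 ≤ (1 - p : ℝ) * exp s := mul_nonneg (by linarith [p.2.2]) (exp_pos s).le
  have hterm : (fun n : ℕ => (1 - p : ℝ) ^ n * p * exp (s * (n + 1)))
      = fun n => p * exp s * ((1 - p) * exp s) ^ n := by
    funext n
    rw [mul_add, mul_one, exp_add, mul_comm s, exp_nat_mul, mul_pow]
    ring
  rw [hterm, div_eq_mul_inv]
  exact (hasSum_geometric_of_lt_one hr hs).mul_left _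

section MapEq

variable (hmap : μ.map X = (geometricMeasure p).map (· + 1)) (hp : p ≠ 0)
  (hs : (1 - p) * exp s < 1)
include hmap hp hs

theorem integrable_exp_mul_of_map_eq_geometric (hX : Measurable X) :
    Integrable (fun ω => exp (s * X ω)) μ := by
  suffices Integrable (fun n : ℕ => exp (s * n)) (μ.map X) from this.comp_measurable hX
  rw [hmap, integrable_map_measure (by fun_prop) (by fun_prop),
    integrable_geometricMeasure_iff hp]
  convert (hasSum_geometric_mul_exp hs).summable with n
  simp [Real.norm_eq_abs, abs_of_pos (exp_pos _)]

theorem mgf_eq_of_map_eq_geometric (hX : Measurable X) :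
    mgf (fun ω => (X ω : ℝ)) μ s = p * exp s / (1 - (1 - p) * exp s) := by
  rw [show (fun ω => (X ω : ℝ)) = Nat.cast ∘ X from rfl, ← mgf_map hX.aemeasurable (by fun_prop),
    hmap, mgf_map (by fun_prop) (by fun_prop), mgf, integral_geometricMeasure hp,
    ← (hasSum_geometric_mul_exp hs).tsum_eq]
  simp

end MapEq

theorem integrable_exp_mul_and_mgf_le_two_of_geometric [IsProbabilityMeasure μ]
    (hX : Measurable X)
    (hX_pmf : ∀ j, 1 ≤ j → μ {ω | X ω = j} = ENNReal.ofReal ((1 - p) ^ (j - 1) * p))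
    (hs : 0 < s) (hps : 2 * s ≤ p) :
    Integrable (fun ω => exp (s * X ω)) μ ∧ mgf (fun ω => (X ω : ℝ)) μ s ≤ 2 := by
  have hp : p ≠ 0 := unitInterval.coe_ne_zero.1 (by linarith)
  have hexp := one_sub_mul_exp_lt_one (show s < p by linarith)
  have hmap := map_eq_map_succ_geometricMeasure hX hp hX_pmf
  exact ⟨integrable_exp_mul_of_map_eq_geometric hmap hp hexp hX,
    (mgf_eq_of_map_eq_geometric hmap hp hexp hX).trans_le (mul_exp_div_le_two (by linarith) hps)⟩

end Geometric

section Chernoff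

variable {Ω ι : Type*} [MeasurableSpace Ω] {μ : Measure Ω} [IsProbabilityMeasure μ]

theorem measureReal_sum_ge_le_of_mgf_le {X : ι → Ω → ℝ} (hindep : iIndepFun X μ)
    (hmeas : ∀ i, Measurable (X i)) {s : ℝ} (hs : 0 ≤ s)
    (hint : ∀ i, Integrable (fun ω => exp (s * X i ω)) μ) {c : ι → ℝ}
    (hc : ∀ i, mgf (X i) μ s ≤ c i) (S : Finset ι) (t : ℝ) :
    μ.real {ω | t ≤ ∑ i ∈ S, X i ω} ≤ exp (-s * t) * ∏ i ∈ S, c i := by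
  have h := measure_ge_le_exp_mul_mgf t hs
    (hindep.integrable_exp_mul_sum (s := S) hmeas fun i _ => hint i)
  simp only [Finset.sum_apply, hindep.mgf_sum hmeas] at h
  refine h.trans ?_
  gcongr with i
  exacts [fun i _ => mgf_nonneg, hc i]

theorem ofReal_one_sub_le_of_measureReal_compl_le {S : Set Ω} {ε : ℝ} (h : μ.real Sᶜ ≤ ε) :
    ENNReal.ofReal (1 - ε) ≤ μ S := by
  have : 1 ≤ μ.real S + μ.real Sᶜ := by
    simpa [Set.union_compl_self] using measureReal_union_le (μ := μ) S Sᶜ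
  rw [← ofReal_measureReal]
  exact ENNReal.ofReal_le_ofReal (by linarith)

end Chernoff

theorem exp_neg_mul_mul_two_pow_le_rpow_neg {n a c γ : ℝ} {m : ℕ} (hn : 2 ≤ n) (hγ : 0 ≤ γ)
    (hm : m ≤ a) (hna : n ≤ a * c) :
    exp (-(a / (2 * (n * (n - 1)))) * (2 * n ^ 2 + 2 * γ * c * n * logb 2 n)) * 2 ^ m
      ≤ n ^ (-γ) := by
  set s := a / (2 * (n * (n - 1)))
  have hN : 0 < 2 * (n * (n - 1)) := by nlinarith
  have ha : 0 ≤ a := (Nat.cast_nonneg m).trans hm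
  have hlogb : log n ≤ logb 2 n := by
    rw [logb, le_div_iff₀ (log_pos one_lt_two)]
    nlinarith [log_nonneg (by linarith : (1 : ℝ) ≤ n), log_two_lt_d9]
  have hquad : a ≤ s * (2 * n ^ 2) := by
    rw [div_mul_eq_mul_div, le_div_iff₀ hN]; nlinarith
  have hlin : 1 ≤ s * (2 * c * n) := by
    rw [div_mul_eq_mul_div, le_div_iff₀ hN]; nlinarith
  have hγlog : γ * log n ≤ s * (2 * γ * c * n * logb 2 n) :=
    calc γ * log n ≤ γ * logb 2 n * 1 := by rw [mul_one]; gcongr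
      _ ≤ γ * logb 2 n * (s * (2 * c * n)) := by
        gcongr; exact mul_nonneg hγ ((log_nonneg (by linarith)).trans hlogb)
      _ = s * (2 * γ * c * n * logb 2 n) := by ring
  have hpow : (2 : ℝ) ^ m ≤ exp a :=
    calc (2 : ℝ) ^ m = exp (m * log 2) := by rw [exp_nat_mul, exp_log two_pos]
      _ ≤ exp a := exp_le_exp.2 (by nlinarith [log_pos one_lt_two, log_two_lt_d9])
  rw [rpow_def_of_pos (by linarith)]
  calc _ ≤ exp (-s * (2 * n ^ 2 + 2 * γ * c * n * logb 2 n)) * exp a := by gcongr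
    _ = exp (-s * (2 * n ^ 2 + 2 * γ * c * n * logb 2 n) + a) := by rw [exp_add]
    _ ≤ exp (log n * -γ) := exp_le_exp.2 (by nlinarith)

theorem sub_succ_div_mem_Icc {n a b i : ℕ} (hn : 2 ≤ n) (hbn : b ≤ n) (hi : i < b - a) :
    ((b : ℝ) - (i + 1)) / (n * (n - 1)) ∈ Set.Icc ((a : ℝ) / (n * (n - 1))) 1 := by
  have hn2 : (2 : ℝ) ≤ n := by exact_mod_cast hn
  have hN : (0 : ℝ) < n * (n - 1) := by nlinarith
  have hab : (a : ℝ) + (i + 1) ≤ b := by exact_mod_cast (by omega : a + (i + 1) ≤ b)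
  have hb : (b : ℝ) ≤ n := by exact_mod_cast hbn
  exact ⟨by gcongr; linarith, div_le_one_of_le₀ (by nlinarith) hN.le⟩

theorem ranking_phase_tail_general
    {Ω : Type*} [MeasurableSpace Ω] (μ : Measure Ω) [IsProbabilityMeasure μ]
    (n k : ℕ) (hn : 2 ≤ n)
    (γ : ℝ) (hγ : 0 < γ)
    (a b : ℕ) (ha0 : 0 < a) (hbn : b ≤ n)
    (halow : (n : ℝ) / 2 ^ k ≤ a) (hba : (b : ℝ) - a ≤ (n : ℝ) / 2 ^ k)
    (T : Fin (b - a) → Ω → ℕ)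
    (hmeas : ∀ i, Measurable (T i))
    (hindep : iIndepFun T μ)
    (hgeom : ∀ i : Fin (b - a), ∀ j : ℕ, 1 ≤ j →
      μ {ω | T i ω = j}
        = ENNReal.ofReal
            ((1 - ((b : ℝ) - ((i : ℝ) + 1)) / ((n : ℝ) * ((n : ℝ) - 1))) ^ (j - 1)
              * (((b : ℝ) - ((i : ℝ) + 1)) / ((n : ℝ) * ((n : ℝ) - 1))))) :
    ENNReal.ofReal (1 - (n : ℝ) ^ (-γ))
      ≤ μ {ω | ∑ i, (T i ω : ℝ)
              ≤ 2 * (n : ℝ) ^ 2 + 2 * γ * 2 ^ k * (n : ℝ) * Real.logb 2 n} := by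
  set t : ℝ := 2 * n ^ 2 + 2 * γ * 2 ^ k * n * logb 2 n
  set s : ℝ := a / (2 * (n * (n - 1)))
  have hn2 : (2 : ℝ) ≤ n := by exact_mod_cast hn
  have hN : (0 : ℝ) < n * (n - 1) := by nlinarith
  have hs : 0 < s := by positivity
  have h2s : 2 * s = a / (n * (n - 1)) := by simp only [s]; field_simp
  have hprob := fun i : Fin (b - a) => sub_succ_div_mem_Icc hn hbn i.2
  let q : Fin (b - a) → unitInterval := fun i =>
    ⟨_, le_trans (by positivity) (hprob i).1, (hprob i).2⟩
  have hq : ∀ i, 2 * s ≤ q i := fun i => h2s.trans_le (hprob i).1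
  have hT := fun i => integrable_exp_mul_and_mgf_le_two_of_geometric (hmeas i) (hgeom i) hs (hq i)
  have htail := measureReal_sum_ge_le_of_mgf_le (X := fun i ω => (T i ω : ℝ))
    (hindep.comp _ fun _ => measurable_from_top) (fun i => by fun_prop) hs.le
    (fun i => (hT i).1) (c := fun _ => 2) (fun i => (hT i).2) Finset.univ t
  have hm : ((b - a : ℕ) : ℝ) ≤ a := by
    have : b ≤ 2 * a := by exact_mod_cast (show (b : ℝ) ≤ 2 * a by linarith)
    exact_mod_cast (by omega : b - a ≤ a)
  refine ofReal_one_sub_le_of_measureReal_compl_le ?_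
  calc μ.real {ω | ∑ i, (T i ω : ℝ) ≤ t}ᶜ ≤ μ.real {ω | t ≤ ∑ i, (T i ω : ℝ)} :=
        measureReal_mono fun ω (hω : ¬ _ ≤ t) => (not_le.1 hω).le
    _ ≤ exp (-s * t) * 2 ^ (b - a) := by simpa using htail
    _ ≤ n ^ (-γ) := exp_neg_mul_mul_two_pow_le_rpow_neg hn2 hγ.le hm
        (by rwa [div_le_iff₀ (by positivity)] at halow)

/-- Tail bound for the ranking phase of the protocol: with `a < b ≤ n`,
`a ≥ n/2^k`, `b - a ≤ n/2^k`, the sum `T = T_1 + ⋯ + T_{b-a}` of independent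
geometric random variables with success probabilities `(b-i)/(n(n-1))` satisfies
`P(T ≤ 2n² + 2γ·2^k·n·log₂ n) ≥ 1 - n^{-γ}`. -/
theorem ranking_phase_tail
    {Ω : Type*} [MeasurableSpace Ω] (μ : Measure Ω) [IsProbabilityMeasure μ]
    (n k : ℕ) (hn : 2 ≤ n) (hk : 1 ≤ k)
    (γ : ℝ) (hγ : 0 < γ)
    (a b : ℕ) (ha0 : 0 < a) (hab : a < b) (hbn : b ≤ n)
    (halow : (n : ℝ) / 2 ^ k ≤ a) (hba : (b : ℝ) - a ≤ (n : ℝ) / 2 ^ k)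
    (T : Fin (b - a) → Ω → ℕ)
    (hmeas : ∀ i, Measurable (T i))
    (hindep : iIndepFun T μ)
    (hgeom : ∀ i : Fin (b - a), ∀ j : ℕ, 1 ≤ j →
      μ {ω | T i ω = j}
        = ENNReal.ofReal
            ((1 - ((b : ℝ) - ((i : ℝ) + 1)) / ((n : ℝ) * ((n : ℝ) - 1))) ^ (j - 1)
              * (((b : ℝ) - ((i : ℝ) + 1)) / ((n : ℝ) * ((n : ℝ) - 1))))) :
    ENNReal.ofReal (1 - (n : ℝ) ^ (-γ))
      ≤ μ {ω | ∑ i, (T i ω : ℝ)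
              ≤ 2 * (n : ℝ) ^ 2 + 2 * γ * 2 ^ k * (n : ℝ) * Real.logb 2 n} :=
  ranking_phase_tail_general μ n k hn γ hγ a b ha0 hbn halow hba T hmeas hindep hgeom
end

section
/- Lower bound on the per-agent leader probability: For every natural number n ≥ 2, ((1 - 1/(4·log₂ n)) · (1/2))^{⌈log₂ n⌉} ≥ 1/(4n). -/
open Real

/-- Lower bound on the per-agent leader probability:
`((1 - 1/(4·log₂ n))·(1/2))^⌈log₂ n⌉ ≥ 1/(4n)` for `n ≥ 2`. -/
theorem leader_prob_lower_bound (n : ℕ) (hn : 2 ≤ n) :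
    1 / (4 * (n : ℝ))
      ≤ ((1 - 1 / (4 * Real.logb 2 n)) * (1 / 2)) ^ ⌈Real.logb 2 n⌉₊ := by
  have hn2 : (2:ℝ) ≤ (n:ℝ) := by exact_mod_cast hn
  have hnpos : (0:ℝ) < n := by linarith
  set L := Real.logb 2 n with hLdef
  have hL : 1 ≤ L := by
    rw [Real.le_logb_iff_rpow_le (by norm_num) hnpos, Real.rpow_one]
    exact hn2
  have hLpos : 0 < L := by linarith
  set k := ⌈L⌉₊ with hk
  have hkL1 : (k:ℝ) ≤ L + 1 :=
    le_of_lt (Nat.ceil_lt_add_one (by positivity))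
  have hkL : (k:ℝ) ≤ 2 * L := by linarith
  -- Bernoulli: (1 - 1/(4L))^k ≥ 1 - k/(4L) ≥ 1/2
  have hA : (1:ℝ)/2 ≤ (1 - 1/(4*L)) ^ k := by
    have hb : (-2:ℝ) ≤ -(1/(4*L)) := by
      have : 1/(4*L) ≤ 1/4 := by
        apply div_le_div_of_nonneg_left (by norm_num) (by norm_num) (by linarith)
      linarith
    have := one_add_mul_le_pow hb k
    have heq : (1:ℝ) + -(1/(4*L)) = 1 - 1/(4*L) := by ring
    rw [heq] at this
    have h2 : (1:ℝ)/2 ≤ 1 + (k:ℝ) * -(1/(4*L)) := by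
      have hdiv : (k:ℝ) * (1/(4*L)) ≤ 2*L * (1/(4*L)) := by
        apply mul_le_mul_of_nonneg_right hkL
        positivity
      have : 2*L * (1/(4*L)) = 1/2 := by field_simp; ring
      nlinarith
    linarith
  -- (1/2)^k ≥ 1/(2n)
  have h2L : (2:ℝ) ^ L = (n:ℝ) := Real.rpow_logb (by norm_num) (by norm_num) hnpos
  have hB : 1/(2*(n:ℝ)) ≤ ((1:ℝ)/2) ^ k := by
    have hpow : (2:ℝ) ^ (k:ℕ) ≤ 2 * n := by
      have h1 : (2:ℝ) ^ (k:ℝ) ≤ (2:ℝ) ^ (L + 1) :=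
        Real.rpow_le_rpow_of_exponent_le (by norm_num) hkL1
      have h2 : (2:ℝ) ^ (L + 1) = 2 * n := by
        rw [Real.rpow_add (by norm_num), h2L, Real.rpow_one]; ring
      calc (2:ℝ) ^ (k:ℕ) = (2:ℝ) ^ (k:ℝ) := (Real.rpow_natCast 2 k).symm
        _ ≤ 2 * n := by rw [← h2]; exact h1
    have hppos : (0:ℝ) < (2:ℝ) ^ (k:ℕ) := by positivity
    rw [div_pow, one_pow, div_le_div_iff₀ (by positivity) hppos]
    linarith
  have hmul : ((1 - 1/(4*L)) * (1/2)) ^ k = (1 - 1/(4*L))^k * ((1:ℝ)/2)^k :=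
    mul_pow _ _ _
  rw [hmul]
  have hApos : (0:ℝ) ≤ (1:ℝ)/2 := by norm_num
  have hBpos : (0:ℝ) ≤ 1/(2*(n:ℝ)) := by positivity
  calc 1/(4*(n:ℝ)) = (1/2) * (1/(2*(n:ℝ))) := by field_simp; ring
    _ ≤ (1 - 1/(4*L))^k * ((1:ℝ)/2)^k := mul_le_mul hA hB hBpos (le_trans hApos hA)
end

section
/- Upper bound on the per-agent leader probability: For every natural number n ≥ 2, ((1 + 1/(4·log₂ n)) · (1/2))^{⌈log₂ n⌉} ≤ 2/n. -/
open Real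

/-- Upper bound on the per-agent leader probability:
`((1 + 1/(4·log₂ n))·(1/2))^⌈log₂ n⌉ ≤ 2/n` for `n ≥ 2`. -/
theorem leader_prob_upper_bound (n : ℕ) (hn : 2 ≤ n) :
    ((1 + 1 / (4 * Real.logb 2 n)) * (1 / 2)) ^ ⌈Real.logb 2 n⌉₊
      ≤ 2 / (n : ℝ) := by
  have hn1 : (2:ℝ) ≤ (n:ℝ) := by exact_mod_cast hn
  have hn0 : (0:ℝ) < (n:ℝ) := by linarith
  set L := Real.logb 2 (n:ℝ) with hLdef
  have hL1 : 1 ≤ L := by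
    have := Real.logb_le_logb_of_le (b := 2) (by norm_num) (by norm_num : (0:ℝ) < 2) hn1
    simpa [Real.logb_self_eq_one] using this
  have hL0 : 0 < L := by linarith
  set k := ⌈L⌉₊ with hkdef
  have hkL : L ≤ (k:ℝ) := Nat.le_ceil L
  have hkU : (k:ℝ) < L + 1 := Nat.ceil_lt_add_one (by linarith)
  have hk2L : (k:ℝ) ≤ 2 * L := by linarith
  -- factor the power
  rw [mul_pow]
  -- bound (1 + 1/(4L))^k ≤ 2
  have h4L : (0:ℝ) < 4 * L := by linarith
  have hbase0 : (0:ℝ) ≤ 1 + 1 / (4 * L) := by positivity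
  have h1 : (1 + 1 / (4 * L)) ^ k ≤ Real.exp (1 / (4 * L)) ^ k := by
    apply pow_le_pow_left₀ hbase0
    have := Real.add_one_le_exp (1 / (4 * L))
    linarith
  have h2 : Real.exp (1 / (4 * L)) ^ k = Real.exp ((k:ℝ) * (1 / (4 * L))) := by
    rw [← Real.exp_nat_mul]
  have h3 : (k:ℝ) * (1 / (4 * L)) ≤ 1 / 2 := by
    rw [mul_one_div, div_le_div_iff₀ h4L (by norm_num)]
    nlinarith
  have hexp2 : Real.exp ((k:ℝ) * (1 / (4 * L))) ≤ 2 := by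
    calc Real.exp ((k:ℝ) * (1 / (4 * L))) ≤ Real.exp (1/2) := Real.exp_le_exp.mpr h3
    _ ≤ 2 := by
        have h := Real.exp_le_exp.mpr (by linarith [Real.log_two_gt_d9] : (1:ℝ)/2 ≤ Real.log 2)
        rwa [Real.exp_log (by norm_num : (0:ℝ) < 2)] at h
  have hA : (1 + 1 / (4 * L)) ^ k ≤ 2 := by
    calc (1 + 1 / (4 * L)) ^ k ≤ Real.exp (1 / (4 * L)) ^ k := h1
    _ = Real.exp ((k:ℝ) * (1 / (4 * L))) := h2
    _ ≤ 2 := hexp2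
  -- bound (1/2)^k ≤ 1/n
  have hn2k : (n:ℝ) ≤ 2 ^ k := by
    have : (n:ℝ) = (2:ℝ) ^ L := by
      rw [hLdef, Real.rpow_logb (by norm_num) (by norm_num) hn0]
    rw [this, ← Real.rpow_natCast 2 k]
    exact Real.rpow_le_rpow_of_exponent_le (by norm_num) hkL
  have hB : ((1:ℝ) / 2) ^ k ≤ 1 / (n:ℝ) := by
    rw [div_pow, one_pow]
    apply div_le_div_of_nonneg_left (by norm_num) hn0 hn2k
  have hpow0 : (0:ℝ) ≤ ((1:ℝ)/2) ^ k := by positivity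
  calc (1 + 1 / (4 * L)) ^ k * ((1:ℝ)/2) ^ k
      ≤ 2 * (1 / (n:ℝ)) := by
        apply mul_le_mul hA hB hpow0 (by norm_num)
  _ = 2 / (n:ℝ) := by ring
end

section
/- Constant probability of many heads after a linear number of steps (coin analysis for phase agents): Let n ≥ 2 be an integer and let (R_k)_{k≥0} be a sequence of real-valued random variables on a probability space equipped with a filtration (F_k)_{k≥0}, such that each R_k is F_k-measurable and integrable, 0 ≤ R_k ≤ 1 almost surely, and E[R_{k+1} | F_k] ≥ R_k + (1 - 2·R_k)/n almost surely for every k. Then for every natural number m with m ≥ 3n/2, P(R_m ≥ 1/3) ≥ 17/80. -/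
/-!
Taking expectations in the drift condition, `a k = E[R k]` satisfies
`1/2 - a (k+1) ≤ (1 - 2/n) (1/2 - a k)`, so after `m ≥ 3n/2` steps the gap `1/2 - a m` is at most
`(1/2) e⁻³ ≤ 1/40`. Since `R m ≤ 1`, Markov's inequality for `1 - R m` turns `E[R m] ≥ 19/40`
into `P(R m ≥ 1/3) ≥ (19/40 - 1/3) / (2/3) = 17/80`.
-/

open MeasureTheory ProbabilityTheory Real

namespace Real

theorem one_sub_pow_le_exp_neg_mul {x : ℝ} (hx : x ≤ 1) (m : ℕ) :
    (1 - x) ^ m ≤ exp (-(m * x)) :=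
  calc (1 - x) ^ m ≤ exp (-x) ^ m := pow_le_pow_left₀ (by linarith) (one_sub_le_exp_neg x) m
    _ = exp (-(m * x)) := by rw [← exp_nat_mul, mul_neg]

theorem exp_neg_three_lt : exp (-3) < 1 / 20 := by
  have h3 : exp 3 = exp 1 ^ 3 := by rw [← exp_nat_mul]; norm_num
  have h20 : 20 < exp 3 := by
    rw [h3]
    calc (20 : ℝ) < 2.7182818283 ^ 3 := by norm_num
      _ < exp 1 ^ 3 := by gcongr; exact exp_one_gt_d9
  rw [exp_neg, ← one_div]
  exact one_div_lt_one_div_of_lt (by norm_num) h20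

end Real

namespace MeasureTheory

variable {Ω : Type*} {m m0 : MeasurableSpace Ω} {μ : Measure Ω}

theorem integral_le_of_le_condExp [IsFiniteMeasure μ] (hm : m ≤ m0) {f g : Ω → ℝ}
    (hf : Integrable f μ) (hfg : f ≤ᵐ[μ] μ[g|m]) : ∫ ω, f ω ∂μ ≤ ∫ ω, g ω ∂μ :=
  calc ∫ ω, f ω ∂μ ≤ ∫ ω, (μ[g|m]) ω ∂μ := integral_mono_ae hf integrable_condExp hfg
    _ = ∫ ω, g ω ∂μ := integral_condExp hm

theorem integral_add_drift_le_integral [IsProbabilityMeasure μ] (hm : m ≤ m0) {f g : Ω → ℝ}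
    (hf : Integrable f μ) {r : ℝ} (hdrift : ∀ᵐ ω ∂μ, f ω + (1 - 2 * f ω) / r ≤ μ[g|m] ω) :
    ∫ ω, f ω ∂μ + (1 - 2 * ∫ ω, f ω ∂μ) / r ≤ ∫ ω, g ω ∂μ := by
  have hf' : Integrable (fun ω => 2 * f ω) μ := hf.const_mul 2
  have hincr : Integrable (fun ω => (1 - 2 * f ω) / r) μ :=
    ((integrable_const 1).sub hf').div_const r
  calc ∫ ω, f ω ∂μ + (1 - 2 * ∫ ω, f ω ∂μ) / r
      = ∫ ω, (f ω + (1 - 2 * f ω) / r) ∂μ := by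
        rw [integral_add hf hincr, integral_div,
          integral_sub (integrable_const 1) hf', integral_const_mul, integral_const,
          probReal_univ, one_smul]
    _ ≤ ∫ ω, g ω ∂μ := integral_le_of_le_condExp hm (hf.add hincr) hdrift

/-- Reverse Markov inequality. -/
theorem integral_sub_le_mul_measureReal_le [IsProbabilityMeasure μ] {X : Ω → ℝ}
    (hX : Integrable X μ) (hX1 : ∀ᵐ ω ∂μ, X ω ≤ 1) {t : ℝ} (ht : t ≤ 1) :
    ∫ ω, X ω ∂μ - t ≤ (1 - t) * μ.real {ω | t ≤ X ω} := by
  have hmarkov : (1 - t) * μ.real {ω | 1 - t ≤ 1 - X ω} ≤ ∫ ω, (1 - X ω) ∂μ :=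
    mul_meas_ge_le_integral_of_nonneg (hX1.mono fun ω h => sub_nonneg.2 h)
      ((integrable_const 1).sub hX) (1 - t)
  rw [integral_sub (integrable_const 1) hX, integral_const, probReal_univ, one_smul] at hmarkov
  have hcover : 1 ≤ μ.real {ω | t ≤ X ω} + μ.real {ω | 1 - t ≤ 1 - X ω} := by
    calc (1 : ℝ) = μ.real Set.univ := probReal_univ.symm
      _ ≤ μ.real ({ω | t ≤ X ω} ∪ {ω | 1 - t ≤ 1 - X ω}) := by
        refine measureReal_mono (fun ω _ => ?_)
        by_cases h : t ≤ X ω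
        · exact Or.inl h
        · exact Or.inr (by simp only [Set.mem_ofPred_eq]; linarith)
      _ ≤ _ := measureReal_union_le _ _
  nlinarith

end MeasureTheory

theorem heads_fraction_constant_prob_general
    {Ω : Type*} {m0 : MeasurableSpace Ω} (μ : Measure Ω) [IsProbabilityMeasure μ]
    (ℱ : Filtration ℕ m0) (n : ℕ) (hn : 2 ≤ n)
    (R : ℕ → Ω → ℝ)
    (hint : ∀ k, Integrable (R k) μ)
    (hbound : ∀ k, ∀ᵐ ω ∂μ, 0 ≤ R k ω ∧ R k ω ≤ 1)
    (hdrift : ∀ k, ∀ᵐ ω ∂μ,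
      R k ω + (1 - 2 * R k ω) / (n : ℝ) ≤ (μ[R (k + 1) | ℱ k]) ω) :
    ∀ m : ℕ, 3 * (n : ℝ) / 2 ≤ (m : ℝ) →
      ENNReal.ofReal (17 / 80) ≤ μ {ω | 1 / 3 ≤ R m ω} := by
  intro m hm
  have hn2 : (2 : ℝ) ≤ n := by exact_mod_cast hn
  have hq : 2 / (n : ℝ) ≤ 1 := (div_le_one (by positivity)).2 hn2
  set a : ℕ → ℝ := fun k => ∫ ω, R k ω ∂μ
  have hstep (k : ℕ) : 1 / 2 - a (k + 1) ≤ (1 - 2 / n) * (1 / 2 - a k) := by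
    have := integral_add_drift_le_integral (ℱ.le k) (hint k) (hdrift k)
    have hgap : (1 - 2 / (n : ℝ)) * (1 / 2 - a k) = 1 / 2 - (a k + (1 - 2 * a k) / n) := by ring
    linarith
  have hgeom := le_geom (u := fun k => 1 / 2 - a k) (sub_nonneg.2 hq) m fun k _ => hstep k
  have hpow : (1 - 2 / (n : ℝ)) ^ m ≤ 1 / 20 := by
    have h3 : -((m : ℝ) * (2 / n)) ≤ -3 := by
      rw [neg_le_neg_iff, mul_div_assoc', le_div_iff₀ (by positivity)]; linarith
    exact (one_sub_pow_le_exp_neg_mul hq m).trans ((exp_le_exp.2 h3).trans exp_neg_three_lt.le)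
  have ha0 : 0 ≤ a 0 := integral_nonneg_of_ae ((hbound 0).mono fun ω h => h.1)
  have ham : 19 / 40 ≤ a m := by nlinarith [pow_nonneg (sub_nonneg.2 hq) m]
  have hmarkov := integral_sub_le_mul_measureReal_le (hint m)
    ((hbound m).mono fun ω h => h.2) (t := 1 / 3) (by norm_num)
  refine ENNReal.ofReal_le_of_le_toReal ?_
  rw [← measureReal_def]
  linarith

/-- Constant probability of many heads after a linear number of steps: if `(R_k)`
is adapted, `0 ≤ R_k ≤ 1` a.s., and `E[R_{k+1} | F_k] ≥ R_k + (1 - 2 R_k)/n` a.s.,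
then for every `m ≥ 3n/2`, `P(R_m ≥ 1/3) ≥ 17/80`. -/
theorem heads_fraction_constant_prob
    {Ω : Type*} {m0 : MeasurableSpace Ω} (μ : Measure Ω) [IsProbabilityMeasure μ]
    (ℱ : Filtration ℕ m0) (n : ℕ) (hn : 2 ≤ n)
    (R : ℕ → Ω → ℝ)
    (hadapted : Adapted ℱ R)
    (hint : ∀ k, Integrable (R k) μ)
    (hbound : ∀ k, ∀ᵐ ω ∂μ, 0 ≤ R k ω ∧ R k ω ≤ 1)
    (hdrift : ∀ k, ∀ᵐ ω ∂μ,
      R k ω + (1 - 2 * R k ω) / (n : ℝ) ≤ (μ[R (k + 1) | ℱ k]) ω) :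
    ∀ m : ℕ, 3 * (n : ℝ) / 2 ≤ (m : ℝ) →
      ENNReal.ofReal (17 / 80) ≤ μ {ω | 1 / 3 ≤ R m ω} :=
  heads_fraction_constant_prob_general μ ℱ n hn R hint hbound hdrift
end
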